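/- arXiv:1912.10683 — 2 statements merged into one kernel-verified Lean document; each statement's English description precedes it below -/
import Mathlib

section
/- The Peregrine breather A_PR(ξ,τ) = e^{2iτ} ( 4(1 + 4iτ)/(1 + 16τ² + 4ξ²) - 1 ) satisfies the temporal NLSE i ∂_τ A + ∂_ξ² A + 2|A|² A = 0 (i.e., with β₁ = 1 and γ₁ = 2). -/
open Complex ComplexConjugate

/-!
Writing `A = e^{2iτ} u`, the phase has modulus one and contributes `-2u` through `i ∂_τ`, so the
equation for `A` becomes `i u_τ + u_ξξ + 2(|u|² - 1) u = 0` for the rational profile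
`u = 4(1 + 4iτ)/D - 1`, `D = 1 + 16τ² + 4ξ²`. With `|u|² = u ū` and `ū = 4(1 - 4iτ)/D - 1`,
this is an identity of rational functions in `ξ, τ`, since `D` never vanishes.
-/

theorem nlse_gauge_reduction (A u : ℝ → ℝ → ℂ)
    (hA : ∀ ξ τ : ℝ, A ξ τ = Complex.exp (2 * I * τ) * u ξ τ) {ξ τ : ℝ}
    (hu : DifferentiableAt ℝ (fun t => u ξ t) τ) :
    I * deriv (fun t => A ξ t) τ + iteratedDeriv 2 (fun x => A x τ) ξ +
        2 * (‖A ξ τ‖ : ℂ) ^ 2 * A ξ τ =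
      Complex.exp (2 * I * τ) * (I * deriv (fun t => u ξ t) τ +
        iteratedDeriv 2 (fun x => u x τ) ξ + 2 * ((‖u ξ τ‖ : ℂ) ^ 2 - 1) * u ξ τ) := by
  have hphase : HasDerivAt (fun t : ℝ => Complex.exp (2 * I * t))
      (Complex.exp (2 * I * τ) * (2 * I * 1)) τ :=
    ((hasDerivAt_id (τ : ℂ)).const_mul (2 * I)).cexp.comp_ofReal
  have hnorm : ‖Complex.exp (2 * I * τ)‖ = 1 := by simp [Complex.norm_exp]
  have hderiv := (hphase.fun_mul hu.hasDerivAt).deriv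
  simp only [hA, iteratedDeriv_const_mul_field, norm_mul, hnorm, one_mul]
  rw [hderiv]
  linear_combination (2 * Complex.exp (2 * I * τ) * u ξ τ) * I_sq

lemma hasDerivAt_quadratic (a b z : ℂ) :
    HasDerivAt (fun w => a + b * w ^ 2) (2 * b * z) z :=
  (((hasDerivAt_pow 2 z).const_mul b).const_add a).congr_deriv (by norm_num; ring)

lemma hasDerivAt_div_quadratic {a b z : ℂ} (c : ℂ) (h : a + b * z ^ 2 ≠ 0) :
    HasDerivAt (fun w => c / (a + b * w ^ 2)) (-(2 * b * c * z) / (a + b * z ^ 2) ^ 2) z :=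
  ((hasDerivAt_const z c).fun_div (hasDerivAt_quadratic a b z) h).congr_deriv (by ring)

lemma hasDerivAt_mul_div_quadratic_sq {a b z : ℂ} (c : ℂ) (h : a + b * z ^ 2 ≠ 0) :
    HasDerivAt (fun w => c * w / (a + b * w ^ 2) ^ 2)
      (c * (a - 3 * b * z ^ 2) / (a + b * z ^ 2) ^ 3) z := by
  refine (((hasDerivAt_id' z).const_mul c).fun_div ((hasDerivAt_quadratic a b z).fun_pow 2)
    (pow_ne_zero 2 h)).congr_deriv ?_
  field_simp
  ring

lemma iteratedDeriv_two_div_quadratic_sub {a b : ℂ} (c d : ℂ)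
    (h : ∀ x : ℝ, a + b * (x : ℂ) ^ 2 ≠ 0) (ξ : ℝ) :
    iteratedDeriv 2 (fun x : ℝ => c / (a + b * (x : ℂ) ^ 2) - d) ξ =
      -(2 * b * c) * (a - 3 * b * (ξ : ℂ) ^ 2) / (a + b * (ξ : ℂ) ^ 2) ^ 3 := by
  have hfirst : deriv (fun x : ℝ => c / (a + b * (x : ℂ) ^ 2) - d) =
      fun x : ℝ => -(2 * b * c) * x / (a + b * (x : ℂ) ^ 2) ^ 2 := by
    ext x
    rw [((hasDerivAt_div_quadratic c (h x)).comp_ofReal.sub_const d).deriv]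
    ring
  rw [iteratedDeriv_succ, iteratedDeriv_one, hfirst]
  exact (hasDerivAt_mul_div_quadratic_sq _ (h ξ)).comp_ofReal.deriv

noncomputable def peregrineProfile (ξ τ : ℝ) : ℂ :=
  4 * (1 + 4 * I * τ) / (1 + 16 * (τ : ℂ) ^ 2 + 4 * (ξ : ℂ) ^ 2) - 1

lemma peregrine_denom_ne_zero (ξ τ : ℝ) : (1 + 16 * (τ : ℂ) ^ 2 + 4 * (ξ : ℂ) ^ 2) ≠ 0 :=
  mod_cast (by positivity : (0 : ℝ) < 1 + 16 * τ ^ 2 + 4 * ξ ^ 2).ne'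

lemma hasDerivAt_peregrineProfile_time (ξ τ : ℝ) :
    HasDerivAt (fun t => peregrineProfile ξ t)
      ((16 * I * (1 + 16 * (τ : ℂ) ^ 2 + 4 * (ξ : ℂ) ^ 2) - 4 * (1 + 4 * I * τ) * (32 * τ)) /
        (1 + 16 * (τ : ℂ) ^ 2 + 4 * (ξ : ℂ) ^ 2) ^ 2) τ := by
  have hnum : HasDerivAt (fun z : ℂ => 4 * (1 + 4 * I * z)) (16 * I) τ :=
    ((((hasDerivAt_id (τ : ℂ)).const_mul (4 * I)).const_add 1).const_mul 4).congr_deriv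
      (by ring)
  have hden : HasDerivAt (fun z : ℂ => 1 + 16 * z ^ 2 + 4 * (ξ : ℂ) ^ 2) (32 * (τ : ℂ)) τ :=
    ((hasDerivAt_quadratic 1 16 (τ : ℂ)).add_const (4 * (ξ : ℂ) ^ 2)).congr_deriv (by ring)
  exact ((hnum.fun_div hden (peregrine_denom_ne_zero ξ τ)).sub_const 1).comp_ofReal

lemma iteratedDeriv_two_peregrineProfile_space (ξ τ : ℝ) :
    iteratedDeriv 2 (fun x => peregrineProfile x τ) ξ =
      -(32 * (1 + 4 * I * τ)) * (1 + 16 * (τ : ℂ) ^ 2 - 12 * (ξ : ℂ) ^ 2) /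
        (1 + 16 * (τ : ℂ) ^ 2 + 4 * (ξ : ℂ) ^ 2) ^ 3 := by
  unfold peregrineProfile
  rw [iteratedDeriv_two_div_quadratic_sub _ _ (fun x => peregrine_denom_ne_zero x τ)]
  ring

lemma conj_peregrineProfile (ξ τ : ℝ) :
    conj (peregrineProfile ξ τ) =
      4 * (1 - 4 * I * τ) / (1 + 16 * (τ : ℂ) ^ 2 + 4 * (ξ : ℂ) ^ 2) - 1 := by
  simp [peregrineProfile, map_ofNat, sub_eq_add_neg]

lemma peregrineProfile_nlse (ξ τ : ℝ) :
    I * deriv (fun t => peregrineProfile ξ t) τ +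
      iteratedDeriv 2 (fun x => peregrineProfile x τ) ξ +
      2 * ((‖peregrineProfile ξ τ‖ : ℂ) ^ 2 - 1) * peregrineProfile ξ τ = 0 := by
  rw [(hasDerivAt_peregrineProfile_time ξ τ).deriv, iteratedDeriv_two_peregrineProfile_space,
    ← mul_conj', conj_peregrineProfile, peregrineProfile]
  have hD := peregrine_denom_ne_zero ξ τ
  field_simp
  ring_nf
  simp only [I_sq, I_pow_three]
  ring

/-- The Peregrine breather `A(ξ,τ) = e^{2iτ}(4(1+4iτ)/(1+16τ²+4ξ²) - 1)` satisfies
the temporal NLSE `i ∂_τ A + ∂_ξ² A + 2|A|² A = 0`. -/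
theorem stmt_8 (A : ℝ → ℝ → ℂ)
    (hA : ∀ ξ τ : ℝ, A ξ τ = Complex.exp (2 * Complex.I * (τ : ℂ)) *
      (4 * (1 + 4 * Complex.I * (τ : ℂ)) / (1 + 16 * (τ : ℂ) ^ 2 + 4 * (ξ : ℂ) ^ 2) - 1)) :
    ∀ ξ τ : ℝ,
      Complex.I * deriv (fun t : ℝ => A ξ t) τ +
        iteratedDeriv 2 (fun x : ℝ => A x τ) ξ +
        2 * (↑‖A ξ τ‖ : ℂ) ^ 2 * A ξ τ = 0 := by
  intro ξ τ
  rw [nlse_gauge_reduction A peregrineProfile hA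
    (hasDerivAt_peregrineProfile_time ξ τ).differentiableAt, peregrineProfile_nlse, mul_zero]
end

section
/- For 0 < ν < 2 and σ = ν√(4 - ν²), the Akhmediev breather A_AEK(ξ,τ) = e^{2iτ} ( (ν³ cosh(στ) + iνσ sinh(στ)) / (2ν cosh(στ) - σ cos(νξ)) - 1 ) satisfies the temporal NLSE i ∂_τ A + ∂_ξ² A + 2|A|² A = 0 at all points where the denominator 2ν cosh(στ) - σ cos(νξ) is nonzero. -/
/-!
Write `A = e^{2iτ} u` with `u = N / D - 1`, `N = ν³ cosh(στ) + iνσ sinh(στ)` and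
`D = 2ν cosh(στ) - σ cos(νξ)`. Then `i A_τ + A_ξξ + 2|A|²A = e^{2iτ} (i u_τ - 2u + u_ξξ + 2|u|²u)`,
and every derivative of `u` is an explicit rational expression in `cosh, sinh, cos, sin` with
powers of `D` as denominators. After clearing `D³` the reduced equation follows from
`cosh² - sinh² = 1`, `sin² + cos² = 1` and `σ² + ν⁴ = 4ν²`, which is the only way the choice
`σ = ν√(4 - ν²)` enters.
-/

open Real Complex Filter Topology ComplexConjugate

theorem iteratedDeriv_two_eq_of_hasDerivAt {𝕜 F : Type*} [NontriviallyNormedField 𝕜]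
    [NormedAddCommGroup F] [NormedSpace 𝕜 F] {f f' : 𝕜 → F} {f'' : F} {x : 𝕜}
    (hf : ∀ᶠ y in 𝓝 x, HasDerivAt f (f' y) y) (hf' : HasDerivAt f' f'' x) :
    iteratedDeriv 2 f x = f'' := by
  rw [iteratedDeriv_succ, iteratedDeriv_one]
  exact (hf'.congr_of_eventuallyEq (hf.mono fun y hy => hy.deriv)).deriv

theorem HasDerivAt.exp_mul_I_mul {u : ℝ → ℂ} {u' : ℂ} {t : ℝ} (ω : ℂ)
    (hu : HasDerivAt u u' t) :
    HasDerivAt (fun t : ℝ => Complex.exp (ω * I * t) * u t)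
      (Complex.exp (ω * I * t) * (ω * I * u t + u')) t := by
  have hexp : HasDerivAt (fun t : ℝ => Complex.exp (ω * I * t))
      (Complex.exp (ω * I * t) * (ω * I)) t := by
    simpa using ((hasDerivAt_id t).ofReal_comp.const_mul (ω * I)).cexp
  exact (hexp.mul hu).congr_deriv (by ring)

theorem ofReal_norm_exp_mul_sq {w : ℂ} (hw : w.re = 0) (z : ℂ) :
    ((‖Complex.exp w * z‖ : ℝ) : ℂ) ^ 2 = z * conj z := by
  rw [norm_mul, Complex.norm_exp, hw, Real.exp_zero, one_mul, Complex.mul_conj']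

theorem hasDerivAt_ofReal_cosh_mul (σ t : ℝ) :
    HasDerivAt (fun t : ℝ => (Real.cosh (σ * t) : ℂ)) (σ * Real.sinh (σ * t)) t := by
  simpa [mul_comm] using (((hasDerivAt_id t).const_mul σ).cosh).ofReal_comp

theorem hasDerivAt_ofReal_sinh_mul (σ t : ℝ) :
    HasDerivAt (fun t : ℝ => (Real.sinh (σ * t) : ℂ)) (σ * Real.cosh (σ * t)) t := by
  simpa [mul_comm] using (((hasDerivAt_id t).const_mul σ).sinh).ofReal_comp

theorem hasDerivAt_ofReal_cos_mul (k x : ℝ) :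
    HasDerivAt (fun x : ℝ => (Real.cos (k * x) : ℂ)) (-(k * Real.sin (k * x))) x := by
  simpa [mul_comm] using (((hasDerivAt_id x).const_mul k).cos).ofReal_comp

theorem hasDerivAt_ofReal_sin_mul (k x : ℝ) :
    HasDerivAt (fun x : ℝ => (Real.sin (k * x) : ℂ)) (k * Real.cos (k * x)) x := by
  simpa [mul_comm] using (((hasDerivAt_id x).const_mul k).sin).ofReal_comp

theorem iteratedDeriv_two_mul_div_sub_cos (E c a b : ℂ) (k x : ℝ)
    (hD : a - b * Real.cos (k * x) ≠ 0) :
    iteratedDeriv 2 (fun y : ℝ => E * (c / (a - b * Real.cos (k * y)) - 1)) x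
      = E * (2 * c * (b * k * Real.sin (k * x)) ^ 2 / (a - b * Real.cos (k * x)) ^ 3
        - c * (b * k ^ 2 * Real.cos (k * x)) / (a - b * Real.cos (k * x)) ^ 2) := by
  set D : ℝ → ℂ := fun y => a - b * Real.cos (k * y)
  have hD' (y : ℝ) : HasDerivAt D (b * k * Real.sin (k * y)) y :=
    (((hasDerivAt_ofReal_cos_mul k y).const_mul b).const_sub a).congr_deriv (by ring)
  have hfirst : ∀ᶠ y in 𝓝 x, HasDerivAt (fun y => E * (c / D y - 1))
      (-(E * c * b * k) * Real.sin (k * y) / D y ^ 2) y := by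
    filter_upwards [(show Continuous D by fun_prop).continuousAt.eventually_ne hD] with y hy
    exact ((((hasDerivAt_const y c).fun_div (hD' y) hy).sub_const 1).const_mul E).congr_deriv
      (by ring)
  apply iteratedDeriv_two_eq_of_hasDerivAt hfirst
  refine (((hasDerivAt_ofReal_sin_mul k x).const_mul (-(E * c * b * k))).fun_div
    ((hD' x).fun_pow 2) (pow_ne_zero 2 hD)).congr_deriv ?_
  simp only [D]
  field_simp
  ring

/- Times `D³`, the left side is `D (i W) + 2ν²σ²N S² - ν²σ N C D + 2(N - D)(NM - D(N + M))`
with `W` the numerator of the quotient rule; `hW` and `hNM` evaluate the two brackets, and what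
is left is `νσ c C D (σ² + ν⁴ - 4ν²)`. -/
theorem akhmediev_reduced_nlse (ν σ c s C S : ℂ) {N M D : ℂ}
    (hN : N = ν ^ 3 * c + I * ν * σ * s) (hM : M = ν ^ 3 * c - I * ν * σ * s)
    (hD : D = 2 * ν * c - σ * C) (hD0 : D ≠ 0)
    (hcs : c ^ 2 - s ^ 2 = 1) (hSC : S ^ 2 + C ^ 2 = 1) (hσ : σ ^ 2 + ν ^ 4 = 4 * ν ^ 2) :
    I * (2 * I * (N / D - 1)
        + (σ * (ν ^ 3 * s + I * ν * σ * c) * D - N * (σ * (2 * ν * s))) / D ^ 2)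
      + (2 * N * (σ * ν * S) ^ 2 / D ^ 3 - N * (σ * ν ^ 2 * C) / D ^ 2)
      + 2 * ((N / D - 1) * (M / D - 1)) * (N / D - 1) = 0 := by
  have hW : I * (σ * (ν ^ 3 * s + I * ν * σ * c) * D - N * (σ * (2 * ν * s)))
      = ν * σ ^ 2 * (σ * c * C - 2 * ν - I * ν ^ 2 * s * C) := by
    subst hN hD
    linear_combination 2 * ν ^ 2 * σ ^ 2 * I ^ 2 * hcs
      + (2 * ν ^ 2 * σ ^ 2 - ν * σ ^ 3 * c * C) * I_sq
  have hNM : N * M - D * (N + M) = ν ^ 2 * σ * (2 * ν * c * C - σ) := by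
    subst hN hM hD
    linear_combination -ν ^ 2 * σ ^ 2 * s ^ 2 * I_sq - ν ^ 2 * σ ^ 2 * hcs + ν ^ 2 * c ^ 2 * hσ
  field_simp
  linear_combination 2 * (N - D) * D ^ 2 * I_sq + D * hW + 2 * (N - D) * hNM
    + 2 * N * σ ^ 2 * ν ^ 2 * hSC + ν ^ 2 * σ * C * D * hN + ν * σ * c * C * D * hσ
    - 2 * N * σ * ν ^ 2 * C * hD

/-- The Akhmediev breather satisfies the temporal NLSE
`i ∂_τ A + ∂_ξ² A + 2|A|² A = 0` wherever its denominator
`2ν cosh(στ) - σ cos(νξ)` is nonzero, with `0 < ν < 2` and `σ = ν√(4-ν²)`. -/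
theorem stmt_10 (ν : ℝ) (hν : 0 < ν) (hν2 : ν < 2) (σ : ℝ)
    (hσ : σ = ν * Real.sqrt (4 - ν ^ 2))
    (A : ℝ → ℝ → ℂ)
    (hA : ∀ ξ τ : ℝ, A ξ τ = Complex.exp (2 * Complex.I * (τ : ℂ)) *
      (((ν : ℂ) ^ 3 * (Real.cosh (σ * τ) : ℂ) +
          Complex.I * (ν : ℂ) * (σ : ℂ) * (Real.sinh (σ * τ) : ℂ)) /
        (2 * (ν : ℂ) * (Real.cosh (σ * τ) : ℂ) - (σ : ℂ) * (Real.cos (ν * ξ) : ℂ)) - 1)) :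
    ∀ ξ τ : ℝ, 2 * ν * Real.cosh (σ * τ) - σ * Real.cos (ν * ξ) ≠ 0 →
      Complex.I * deriv (fun t : ℝ => A ξ t) τ +
        iteratedDeriv 2 (fun x : ℝ => A x τ) ξ +
        2 * (↑‖A ξ τ‖ : ℂ) ^ 2 * A ξ τ = 0 := by
  intro ξ τ hD
  have hD0 : 2 * (ν : ℂ) * (Real.cosh (σ * τ) : ℂ) - σ * (Real.cos (ν * ξ) : ℂ) ≠ 0 := by
    exact_mod_cast hD
  have hσν : (σ : ℂ) ^ 2 + ν ^ 4 = 4 * ν ^ 2 := by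
    have : σ ^ 2 + ν ^ 4 = 4 * ν ^ 2 := by
      rw [hσ, mul_pow, Real.sq_sqrt (by nlinarith)]
      ring
    exact_mod_cast this
  have hNum := ((hasDerivAt_ofReal_cosh_mul σ τ).const_mul ((ν : ℂ) ^ 3)).fun_add
    ((hasDerivAt_ofReal_sinh_mul σ τ).const_mul (I * ν * σ))
  have hDen := ((hasDerivAt_ofReal_cosh_mul σ τ).const_mul (2 * (ν : ℂ))).sub_const
    ((σ : ℂ) * Real.cos (ν * ξ))
  simp only [hA]
  rw [(((hNum.fun_div hDen hD0).sub_const 1).exp_mul_I_mul 2).deriv,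
    iteratedDeriv_two_mul_div_sub_cos _ _ _ _ _ _ hD0, ofReal_norm_exp_mul_sq (by simp)]
  simp only [map_sub, map_div₀, map_one, map_add, map_mul, map_pow, conj_I, conj_ofReal,
    map_ofNat]
  linear_combination Complex.exp (2 * I * τ) * akhmediev_reduced_nlse ν σ
    (Real.cosh (σ * τ)) (Real.sinh (σ * τ)) (Real.cos (ν * ξ)) (Real.sin (ν * ξ)) rfl rfl rfl hD0
    (by exact_mod_cast Real.cosh_sq_sub_sinh_sq _) (by exact_mod_cast Real.sin_sq_add_cos_sq _) hσν
end
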